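/- arXiv:math/0510234 — 2 statements merged into one kernel-verified Lean document; each statement's English description precedes it below -/
import Mathlib

section
/- Let α : M → ℝ be positive and θ-Hölder continuous on a compact metric space, f : M → M continuous, and suppose there are constants C₀ > 0 and κ ∈ (0,1) such that d(f^i(p), f^i(q)) ≤ C₀·κ^i for all 0 ≤ i ≤ n−1. Then there is a constant C ≥ 1, independent of n, p, q, such that C^{-1} ≤ α_n(q)/α_n(p) ≤ C. -/
/-!
Since α is continuous on a compact space it is bounded below by some `m > 0`, so each factor
satisfies `α(f^i q) / α(f^i p) ≤ 1 + |α(f^i q) - α(f^i p)| / m ≤ exp (|Ch| (C₀ κ^i)^θ / m)`.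
The exponents form a geometric series with ratio `κ^θ < 1`, whose sum is bounded independently
of `n`; exchanging `p` and `q` gives the lower bound.
-/

open Finset Real

theorem continuous_of_abs_sub_le_mul_rpow {X : Type*} [PseudoMetricSpace X] {g : X → ℝ}
    {C θ : ℝ} (hθ : 0 < θ) (h : ∀ x y, |g x - g y| ≤ C * dist x y ^ θ) : Continuous g := by
  refine continuous_iff_continuousAt.2 fun x => tendsto_iff_dist_tendsto_zero.2 ?_
  have hlim : Filter.Tendsto (fun y => C * dist y x ^ θ) (nhds x) (nhds 0) := by
    have hcont : Continuous fun y => C * dist y x ^ θ :=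
      continuous_const.mul ((continuous_id.dist continuous_const).rpow_const
        fun _ => Or.inr hθ.le)
    simpa [Real.zero_rpow hθ.ne'] using hcont.tendsto x
  exact squeeze_zero (fun _ => dist_nonneg) (fun y => (Real.dist_eq _ _).trans_le (h y x)) hlim

theorem div_le_exp_abs_sub_div {a b m : ℝ} (hm : 0 < m) (ha : m ≤ a) :
    b / a ≤ exp (|b - a| / m) := by
  have ha0 : 0 < a := hm.trans_le ha
  calc b / a = 1 + (b - a) / a := by field_simp; ring
    _ ≤ 1 + |b - a| / m := by
        gcongr
        exact le_abs_self _
    _ ≤ exp (|b - a| / m) := by linarith [add_one_le_exp (|b - a| / m)]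

theorem prod_div_prod_le_exp_sum {ι : Type*} (s : Finset ι) {a b : ι → ℝ} {m : ℝ} (hm : 0 < m)
    (ha : ∀ i ∈ s, m ≤ a i) (hb : ∀ i ∈ s, 0 ≤ b i) :
    (∏ i ∈ s, b i) / (∏ i ∈ s, a i) ≤ exp (∑ i ∈ s, |b i - a i| / m) := by
  rw [← prod_div_distrib, exp_sum]
  exact prod_le_prod (fun i hi => div_nonneg (hb i hi) (hm.le.trans (ha i hi)))
    fun i hi => div_le_exp_abs_sub_div hm (ha i hi)

theorem sum_rpow_geometric_le {C₀ κ θ : ℝ} (hC₀ : 0 ≤ C₀) (hκ0 : 0 ≤ κ) (hκ1 : κ < 1)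
    (hθ : 0 < θ) (n : ℕ) :
    ∑ i ∈ range n, (C₀ * κ ^ i) ^ θ ≤ C₀ ^ θ / (1 - κ ^ θ) := by
  have hκθ0 : 0 ≤ κ ^ θ := rpow_nonneg hκ0 θ
  have hκθ1 : κ ^ θ < 1 := rpow_lt_one hκ0 hκ1 hθ
  have hterm : ∀ i, (C₀ * κ ^ i) ^ θ = C₀ ^ θ * (κ ^ θ) ^ i := fun i => by
    rw [mul_rpow hC₀ (pow_nonneg hκ0 i), rpow_pow_comm hκ0]
  simp only [hterm, ← mul_sum]
  have hgeom := geom_sum_Ico_le_of_lt_one (m := 0) (n := n) hκθ0 hκθ1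
  rw [← range_eq_Ico, pow_zero] at hgeom
  calc C₀ ^ θ * ∑ i ∈ range n, (κ ^ θ) ^ i ≤ C₀ ^ θ * (1 / (1 - κ ^ θ)) := by
        gcongr
    _ = C₀ ^ θ / (1 - κ ^ θ) := mul_one_div _ _

theorem prod_iterate_div_le_of_dist_le {M : Type*} [PseudoMetricSpace M] (f : M → M)
    {α : M → ℝ} {m θ Ch C₀ κ : ℝ} (hm : 0 < m) (hmα : ∀ x, m ≤ α x) (hθ : 0 < θ)
    (hHolder : ∀ x y, |α x - α y| ≤ Ch * dist x y ^ θ)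
    (hC₀ : 0 ≤ C₀) (hκ0 : 0 ≤ κ) (hκ1 : κ < 1) {n : ℕ} {p q : M}
    (hd : ∀ i < n, dist (f^[i] p) (f^[i] q) ≤ C₀ * κ ^ i) :
    (∏ i ∈ range n, α (f^[i] q)) / (∏ i ∈ range n, α (f^[i] p)) ≤
      exp (|Ch| * (C₀ ^ θ / (1 - κ ^ θ)) / m) := by
  refine (prod_div_prod_le_exp_sum _ hm (fun i _ => hmα _)
    fun i _ => hm.le.trans (hmα _)).trans (exp_le_exp.2 ?_)
  rw [← sum_div]
  gcongr
  calc ∑ i ∈ range n, |α (f^[i] q) - α (f^[i] p)|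
      ≤ ∑ i ∈ range n, |Ch| * (C₀ * κ ^ i) ^ θ := by
        refine sum_le_sum fun i hi => ?_
        calc |α (f^[i] q) - α (f^[i] p)| ≤ Ch * dist (f^[i] q) (f^[i] p) ^ θ := hHolder _ _
          _ ≤ |Ch| * dist (f^[i] q) (f^[i] p) ^ θ :=
              mul_le_mul_of_nonneg_right (le_abs_self Ch) (rpow_nonneg dist_nonneg θ)
          _ ≤ |Ch| * (C₀ * κ ^ i) ^ θ := by
              gcongr
              rw [dist_comm]
              exact hd i (mem_range.1 hi)
    _ ≤ |Ch| * (C₀ ^ θ / (1 - κ ^ θ)) := by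
        rw [← mul_sum]
        gcongr
        exact sum_rpow_geometric_le hC₀ hκ0 hκ1 hθ n

theorem stmt_2_general {M : Type*} [MetricSpace M] [CompactSpace M]
    (f : M → M) (α : M → ℝ) (hpos : ∀ x, 0 < α x)
    (θ : ℝ) (hθ : 0 < θ) (Ch : ℝ)
    (hHolder : ∀ x y, |α x - α y| ≤ Ch * dist x y ^ θ)
    (C₀ κ : ℝ) (hC₀ : 0 < C₀) (hκ0 : 0 < κ) (hκ1 : κ < 1) :
    ∃ C : ℝ, 1 ≤ C ∧ ∀ (n : ℕ) (p q : M),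
      (∀ i < n, dist (f^[i] p) (f^[i] q) ≤ C₀ * κ ^ i) →
      C⁻¹ ≤ (∏ i ∈ Finset.range n, α (f^[i] q)) / (∏ i ∈ Finset.range n, α (f^[i] p)) ∧
        (∏ i ∈ Finset.range n, α (f^[i] q)) / (∏ i ∈ Finset.range n, α (f^[i] p)) ≤ C := by
  obtain ⟨m, hm, hmα⟩ := isCompact_univ.exists_forall_le'
    (continuous_of_abs_sub_le_mul_rpow hθ hHolder).continuousOn fun x _ => hpos x
  have hK : 0 ≤ |Ch| * (C₀ ^ θ / (1 - κ ^ θ)) / m := by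
    have := rpow_lt_one hκ0.le hκ1 hθ
    have := rpow_nonneg hC₀.le θ
    positivity
  have bound := fun {n : ℕ} {p q : M} => prod_iterate_div_le_of_dist_le (n := n) (p := p) (q := q)
    f hm (fun x => hmα x (Set.mem_univ x)) hθ hHolder hC₀.le hκ0.le hκ1
  refine ⟨exp (|Ch| * (C₀ ^ θ / (1 - κ ^ θ)) / m), one_le_exp hK, fun n p q hd => ⟨?_, bound hd⟩⟩
  have hP : 0 < ∏ i ∈ range n, α (f^[i] p) := prod_pos fun i _ => hpos _
  have hQ : 0 < ∏ i ∈ range n, α (f^[i] q) := prod_pos fun i _ => hpos _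
  rw [inv_le_comm₀ (exp_pos _) (div_pos hQ hP), inv_div]
  exact bound fun i hi => dist_comm (f^[i] q) (f^[i] p) ▸ hd i hi

/-- Distortion estimate along exponentially shadowing orbits (Lemma `constalpha`). -/
theorem stmt_2 {M : Type*} [MetricSpace M] [CompactSpace M]
    (f : M → M) (hf : Continuous f) (α : M → ℝ) (hpos : ∀ x, 0 < α x)
    (θ : ℝ) (hθ : 0 < θ) (Ch : ℝ)
    (hHolder : ∀ x y, |α x - α y| ≤ Ch * dist x y ^ θ)
    (C₀ κ : ℝ) (hC₀ : 0 < C₀) (hκ0 : 0 < κ) (hκ1 : κ < 1) :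
    ∃ C : ℝ, 1 ≤ C ∧ ∀ (n : ℕ) (p q : M),
      (∀ i < n, dist (f^[i] p) (f^[i] q) ≤ C₀ * κ ^ i) →
      C⁻¹ ≤ (∏ i ∈ Finset.range n, α (f^[i] q)) / (∏ i ∈ Finset.range n, α (f^[i] p)) ∧
        (∏ i ∈ Finset.range n, α (f^[i] q)) / (∏ i ∈ Finset.range n, α (f^[i] p)) ≤ C :=
  stmt_2_general f α hpos θ hθ Ch hHolder C₀ κ hC₀ hκ0 hκ1
end

section
/- Let f : M → M be partially hyperbolic with adapted metric and continuous functions ν, γ̂ as in the definition (ν < 1, and f expands distances along fake center leaves by at most γ̂^{-1}). Let σ < min{γ̂, 1} be a continuous function, and define S_n(p) = ⋃_{x ∈ W^s(p,1)} Ŵ^c_p(x, σ_n(p)). Then there exist constants κ ∈ (0,1) and C > 0 such that f^j(S_n(p)) ⊆ B(f^j(p), C·κ^j) for all 0 ≤ j ≤ n. -/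
/-- Lemma `sliceest`: the iterates of the slab S_n(p) shrink exponentially. -/
theorem stmt_12 {M : Type*} [MetricSpace M] [CompactSpace M]
    (f : M → M) (ν γh σ : M → ℝ)
    (hνc : Continuous ν) (hγc : Continuous γh) (hσc : Continuous σ)
    (hνpos : ∀ p, 0 < ν p) (hν1 : ∀ p, ν p < 1)
    (hγpos : ∀ p, 0 < γh p)
    (hσpos : ∀ p, 0 < σ p) (hσγ : ∀ p, σ p < γh p) (hσ1 : ∀ p, σ p < 1)
    (Ws1 : M → Set M) (Wc : M → M → ℝ → Set M)
    (hWs : ∀ (p x : M) (j : ℕ), x ∈ Ws1 p →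
      dist (f^[j] x) (f^[j] p) ≤ ∏ i ∈ Finset.range j, ν (f^[i] p))
    (hWc : ∀ (n : ℕ) (p x y : M) (j : ℕ), j ≤ n → x ∈ Ws1 p →
      y ∈ Wc p x (∏ i ∈ Finset.range n, σ (f^[i] p)) →
      dist (f^[j] y) (f^[j] x) ≤
        (∏ i ∈ Finset.range j, γh (f^[i] p))⁻¹ * ∏ i ∈ Finset.range n, σ (f^[i] p)) :
    ∃ C > (0 : ℝ), ∃ κ : ℝ, 0 < κ ∧ κ < 1 ∧ ∀ (n : ℕ) (p : M) (j : ℕ), j ≤ n →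
      ∀ y ∈ ⋃ x ∈ Ws1 p, Wc p x (∏ i ∈ Finset.range n, σ (f^[i] p)),
        dist (f^[j] y) (f^[j] p) ≤ C * κ ^ j := by
  rcases isEmpty_or_nonempty M with hM | hM
  · exact ⟨1, one_pos, 1/2, by norm_num, by norm_num, fun n p => (IsEmpty.false p).elim⟩
  -- define g = max(ν, σ/γ̂), continuous, < 1, > 0
  set g : M → ℝ := fun p => max (ν p) (σ p / γh p) with hg
  have hgc : Continuous g := hνc.max (hσc.div hγc fun p => (hγpos p).ne')
  obtain ⟨q, -, hq⟩ := isCompact_univ.exists_isMaxOn Set.univ_nonempty hgc.continuousOn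
  set κ := g q with hκ
  have hκbound : ∀ p, g p ≤ κ := fun p => hq (Set.mem_univ p)
  have hκpos : 0 < κ := lt_of_lt_of_le (hνpos q) (le_max_left _ _)
  have hκ1 : κ < 1 := max_lt (hν1 q) ((div_lt_one (hγpos q)).2 (hσγ q))
  refine ⟨2, by norm_num, κ, hκpos, hκ1, fun n p j hjn y hy => ?_⟩
  simp only [Set.mem_iUnion] at hy
  obtain ⟨x, hx, hyx⟩ := hy
  have hνκ : ∏ i ∈ Finset.range j, ν (f^[i] p) ≤ κ ^ j := by
    calc ∏ i ∈ Finset.range j, ν (f^[i] p)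
        ≤ ∏ i ∈ Finset.range j, κ := by
          refine Finset.prod_le_prod (fun i _ => (hνpos _).le) fun i _ =>
            le_trans (le_max_left _ _) (hκbound _)
      _ = κ ^ j := by simp
  have hγinvpos : 0 < (∏ i ∈ Finset.range j, γh (f^[i] p))⁻¹ :=
    inv_pos.2 (Finset.prod_pos fun i _ => hγpos _)
  have hsplit : ∏ i ∈ Finset.range n, σ (f^[i] p)
      = (∏ i ∈ Finset.range j, σ (f^[i] p)) * ∏ i ∈ Finset.Ico j n, σ (f^[i] p) :=
    (Finset.prod_range_mul_prod_Ico _ hjn).symm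
  have htail : ∏ i ∈ Finset.Ico j n, σ (f^[i] p) ≤ 1 :=
    Finset.prod_le_one (fun i _ => (hσpos _).le) (fun i _ => (hσ1 _).le)
  have hσκ : (∏ i ∈ Finset.range j, γh (f^[i] p))⁻¹ *
      ∏ i ∈ Finset.range n, σ (f^[i] p) ≤ κ ^ j := by
    calc (∏ i ∈ Finset.range j, γh (f^[i] p))⁻¹ * ∏ i ∈ Finset.range n, σ (f^[i] p)
        ≤ (∏ i ∈ Finset.range j, γh (f^[i] p))⁻¹ * ∏ i ∈ Finset.range j, σ (f^[i] p) := by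
          rw [hsplit, ← mul_assoc]
          refine mul_le_of_le_one_right ?_ htail
          exact mul_nonneg hγinvpos.le (Finset.prod_nonneg fun i _ => (hσpos _).le)
      _ = ∏ i ∈ Finset.range j, σ (f^[i] p) / γh (f^[i] p) := by
          rw [Finset.prod_div_distrib, div_eq_inv_mul]
      _ ≤ ∏ i ∈ Finset.range j, κ := by
          refine Finset.prod_le_prod (fun i _ => (div_pos (hσpos _) (hγpos _)).le) fun i _ =>
            le_trans (le_max_right _ _) (hκbound _)
      _ = κ ^ j := by simp
  calc dist (f^[j] y) (f^[j] p)
      ≤ dist (f^[j] y) (f^[j] x) + dist (f^[j] x) (f^[j] p) := dist_triangle _ _ _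
    _ ≤ ((∏ i ∈ Finset.range j, γh (f^[i] p))⁻¹ * ∏ i ∈ Finset.range n, σ (f^[i] p))
        + ∏ i ∈ Finset.range j, ν (f^[i] p) :=
          add_le_add (hWc n p x y j hjn hx hyx) (hWs p x j hx)
    _ ≤ κ ^ j + κ ^ j := add_le_add hσκ hνκ
    _ = 2 * κ ^ j := by ring
end
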